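/- arXiv:1705.07652 — 5 statements merged into one kernel-verified Lean document; each statement's English description precedes it below -/
import Mathlib

section
/- In the category of relations between sets, if m : W → X is an injective, surjective and total relation and p : X → Z is a partial function, then every commuting square p ∘ m = p' ∘ m' with m' : W → Y any relation and p' : Y → Z a partial function such that m' is injective, surjective and total, admits a diagonal relation h : X → Y with h ∘ m = m' and p' ∘ h = p. -/
/-- If `m : W → X` and `m' : W → Y` are injective, surjective and total relations and
`p : X → Z`, `p' : Y → Z` are partial functions with `p ∘ m = p' ∘ m'`, then there is a
diagonal relation `h : X → Y` with `h ∘ m = m'` and `p' ∘ h = p`. -/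
theorem rel_lifting {W X Y Z : Type}
    (m : W → X → Prop) (m' : W → Y → Prop) (p : X → Z → Prop) (p' : Y → Z → Prop)
    -- `m` injective, surjective, total
    (hm_inj : ∀ x, ∃! w, m w x) (hm_tot : ∀ w, ∃ x, m w x)
    -- `m'` injective, surjective, total
    (hm'_inj : ∀ y, ∃! w, m' w y) (hm'_tot : ∀ w, ∃ y, m' w y)
    -- `p` and `p'` partial functions
    (hp : ∀ x z z', p x z → p x z' → z = z')
    (hp' : ∀ y z z', p' y z → p' y z' → z = z')
    (hsq : Relation.Comp m p = Relation.Comp m' p') :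
    ∃ h : X → Y → Prop, Relation.Comp m h = m' ∧ Relation.Comp h p' = p := by
  refine ⟨fun x y => (∃ w, m w x ∧ m' w y) ∧
      ((∃ z, p x z ∧ p' y z) ∨ ¬ ∃ z, p' y z), ?_, ?_⟩
  · funext w y
    apply propext
    constructor
    · rintro ⟨x, hmx, ⟨w', hmw', hm'w'⟩, _⟩
      obtain ⟨u, -, hu⟩ := hm_inj x
      rw [hu w hmx, ← hu w' hmw']; exact hm'w'
    · intro hm'wy
      by_cases hz : ∃ z, p' y z
      · obtain ⟨z, hz⟩ := hz
        have : Relation.Comp m p w z := by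
          rw [hsq]; exact ⟨y, hm'wy, hz⟩
        obtain ⟨x, hmx, hpx⟩ := this
        exact ⟨x, hmx, ⟨w, hmx, hm'wy⟩, Or.inl ⟨z, hpx, hz⟩⟩
      · obtain ⟨x, hmx⟩ := hm_tot w
        exact ⟨x, hmx, ⟨w, hmx, hm'wy⟩, Or.inr hz⟩
  · funext x z
    apply propext
    constructor
    · rintro ⟨y, ⟨⟨w, hmx, hm'y⟩, hdisj⟩, hp'yz⟩
      rcases hdisj with ⟨z', hpz', hp'z'⟩ | hno
      · rwa [← hp' y z' z hp'z' hp'yz]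
      · exact absurd ⟨z, hp'yz⟩ hno
    · intro hpxz
      obtain ⟨w, hmw, -⟩ := hm_inj x
      have : Relation.Comp m' p' w z := by
        rw [← hsq]; exact ⟨x, hmw, hpxz⟩
      obtain ⟨y, hm'y, hp'y⟩ := this
      exact ⟨y, ⟨⟨w, hmw, hm'y⟩, Or.inl ⟨z, hpxz, hp'y⟩⟩, hp'y⟩
end

section
/- Every stochastic-type matrix (a matrix with nonnegative real entries) f : I → J factors as f = p ∘ (id_I ⊗ mix_J), where mix_J is the column vector of all 1s indexed by J, and p : I × J → J is the matrix with ((i,j), j')-entry δ_{j j'} · f_{j i}; moreover p has at most one nonzero entry in each column. -/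
open scoped NNReal

namespace Matrix

variable {R I J : Type*}

def spreadColumns [Zero R] [DecidableEq J] (f : Matrix J I R) : Matrix J (I × J) R :=
  fun j' x => if x.2 = j' then f j' x.1 else 0

/-- `id_I ⊗ mix_J`, with the rows of `id_I` indexed by `I × J`. -/
def fstIndicator [Zero R] [One R] [DecidableEq I] : Matrix (I × J) I R :=
  fun x i' => if x.1 = i' then 1 else 0

theorem eq_snd_of_spreadColumns_ne_zero [Zero R] [DecidableEq J] {f : Matrix J I R}
    {j : J} {x : I × J} (h : spreadColumns f j x ≠ 0) : x.2 = j := by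
  by_contra hne
  exact h (if_neg hne)

theorem spreadColumns_mul_fstIndicator [NonAssocSemiring R] [Fintype I] [Fintype J]
    [DecidableEq I] [DecidableEq J] (f : Matrix J I R) :
    spreadColumns f * (fstIndicator : Matrix (I × J) I R) = f := by
  ext j i
  rw [mul_apply, Fintype.sum_prod_type, Finset.sum_eq_single i, Finset.sum_eq_single j] <;>
    simp_all [spreadColumns, fstIndicator]

end Matrix

/-- Every matrix `f` of nonnegative reals factors as `p ∘ (id_I ⊗ mix_J)`, where
`id_I ⊗ mix_J : I → I × J` has `((i,j), i')`-entry `δ_{i i'}` and `p : I × J → J` has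
`(j', (i,j))`-entry `δ_{j j'} · f_{j i}`; moreover `p` has at most one nonzero entry in
each column. -/
theorem stoch_factorisation {I J : Type} [Fintype I] [Fintype J]
    [DecidableEq I] [DecidableEq J] (f : Matrix J I ℝ≥0) :
    let M : Matrix (I × J) I ℝ≥0 := fun x i' => if x.1 = i' then 1 else 0
    let p : Matrix J (I × J) ℝ≥0 := fun j' x => if x.2 = j' then f j' x.1 else 0
    p * M = f ∧ (∀ (x : I × J) (j j' : J), p j x ≠ 0 → p j' x ≠ 0 → j = j') :=
  ⟨Matrix.spreadColumns_mul_fstIndicator f, fun _ _ _ hj hj' =>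
    (Matrix.eq_snd_of_spreadColumns_ne_zero hj).symm.trans
      (Matrix.eq_snd_of_spreadColumns_ne_zero hj')⟩
end

section
/- Let m : W → X and m' : W → Y be matrices of nonnegative reals each having exactly one nonzero entry in each row and at least one nonzero entry in each column, and let p : X → Z, p' : Y → Z be matrices of nonnegative reals with at most one nonzero entry in each column. If p ∘ m = p' ∘ m', then there exists a nonnegative matrix h : X → Y with h ∘ m = m' and p' ∘ h = p. -/
open scoped NNReal Matrix

/-!
Write `f x` and `g y` for the column of the nonzero entry in row `x` of `m` and row `y` of `m'`.
Then `h * m = m'` says that row `y` of `h` is supported on the fibre `f ⁻¹' {g y}` and is sent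
by `m` to `m' y (g y) • Pi.single (g y) 1`; any vector `v` with `(v ᵥ* m) (g y) ≠ 0`, restricted
to that fibre and normalised, gives such a row. Take for `v` the row `p z` of the unique `z` with
`p' z y ≠ 0` (it is seen by `m` at `g y` because `p * m = p' * m'`), and the all-ones vector if
there is no such `z`. Then `(p' * h) z x = p z x * (p' * m') z (f x) / (p * m) z (f x) = p z x`.
-/

namespace Matrix

variable {W X Y Z R : Type*} [Fintype X]

section Semifield

variable [DecidableEq W] [Semifield R] {m : Matrix X W R} {m' : Matrix Y W R} {f : X → W}
  {g : Y → W}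

def fiberNormalize (m : Matrix X W R) (f : X → W) (v : X → R) (w : W) : X → R :=
  fun x => if f x = w then v x / (v ᵥ* m) w else 0

theorem fiberNormalize_vecMul (hf : ∀ x w, w ≠ f x → m x w = 0) {v : X → R}
    {w : W} (hv : (v ᵥ* m) w ≠ 0) : fiberNormalize m f v w ᵥ* m = Pi.single w 1 := by
  ext w'
  have term : ∀ x, fiberNormalize m f v w x * m x w' =
      if w' = w then v x * m x w / (v ᵥ* m) w else 0 := by
    intro x
    unfold fiberNormalize
    by_cases hx : f x = w <;> by_cases hw' : w' = w
    · rw [if_pos hx, if_pos hw', hw', div_mul_eq_mul_div]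
    · rw [if_pos hx, if_neg hw', hf x w' (hx ▸ hw'), mul_zero]
    · rw [if_neg hx, if_pos hw', hw', hf x w (Ne.symm hx), zero_mul, mul_zero, zero_div]
    · rw [if_neg hx, if_neg hw', zero_mul]
  rw [vecMul_apply_eq_sum, Finset.sum_congr rfl fun x _ => term x]
  by_cases hw' : w' = w
  · rw [hw', Pi.single_eq_same]
    simp only [if_true, ← Finset.sum_div, ← vecMul_apply_eq_sum]
    exact div_self hv
  · simp [hw']

def fiberLift (m : Matrix X W R) (f : X → W) (m' : Matrix Y W R) (g : Y → W) (v : Y → X → R) :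
    Matrix Y X R :=
  fun y => m' y (g y) • fiberNormalize m f (v y) (g y)

theorem fiberLift_mul (hf : ∀ x w, w ≠ f x → m x w = 0) (hg : ∀ y w, w ≠ g y → m' y w = 0)
    {v : Y → X → R} (hv : ∀ y, (v y ᵥ* m) (g y) ≠ 0) : fiberLift m f m' g v * m = m' := by
  ext y w
  rw [mul_apply_eq_vecMul, fiberLift, smul_vecMul, fiberNormalize_vecMul hf (hv y),
    ← Pi.single_smul', smul_eq_mul, mul_one]
  by_cases hw : w = g y
  · rw [hw, Pi.single_eq_same]
  · rw [Pi.single_eq_of_ne hw, hg y w hw]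

theorem mul_fiberLift [Fintype Y] {p : Matrix Z X R} {p' : Matrix Z Y R}
    (hg : ∀ y w, w ≠ g y → m' y w = 0) {v : Y → X → R} (hv_row : ∀ z y, p' z y ≠ 0 → v y = p z)
    (hp : ∀ z x, (p * m) z (f x) = 0 → p z x = 0) (hsq : p * m = p' * m') :
    p' * fiberLift m f m' g v = p := by
  ext z x
  have term : ∀ y, p' z y * fiberLift m f m' g v y x
      = p' z y * m' y (f x) * (p z x / (p * m) z (f x)) := by
    intro y
    by_cases hzy : p' z y = 0
    · simp [hzy]
    by_cases hxy : f x = g y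
    · simp [fiberLift, fiberNormalize, hxy, hv_row z y hzy, mul_apply_eq_vecMul, mul_assoc]
    · simp [fiberLift, fiberNormalize, hxy, hg y (f x) hxy]
  rw [mul_apply, Finset.sum_congr rfl fun y _ => term y, ← Finset.sum_mul, ← mul_apply, ← hsq]
  by_cases hc : (p * m) z (f x) = 0
  · simp [hc, hp z x hc]
  · exact mul_div_cancel₀ _ hc

end Semifield

theorem vecMul_apply_ne_zero [NonUnitalNonAssocSemiring R] [PartialOrder R]
    [CanonicallyOrderedAdd R] [NoZeroDivisors R] {v : X → R} {M : Matrix X W R} {x : X} {w : W}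
    (hv : v x ≠ 0) (hM : M x w ≠ 0) : (v ᵥ* M) w ≠ 0 := by
  rw [vecMul_apply_eq_sum, Ne, Finset.sum_eq_zero_iff]
  exact fun h => mul_ne_zero hv hM (h x (Finset.mem_univ x))

end Matrix

theorem stoch_lifting_general {W X Y Z : Type} [Fintype X] [Fintype Y]
    (m : Matrix X W ℝ≥0) (m' : Matrix Y W ℝ≥0)
    (p : Matrix Z X ℝ≥0) (p' : Matrix Z Y ℝ≥0)
    (hm_row : ∀ x, ∃! w, m x w ≠ 0) (hm_col : ∀ w, ∃ x, m x w ≠ 0)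
    (hm'_row : ∀ y, ∃! w, m' y w ≠ 0)
    (hp' : ∀ y (z z' : Z), p' z y ≠ 0 → p' z' y ≠ 0 → z = z')
    (hsq : p * m = p' * m') :
    ∃ h : Matrix Y X ℝ≥0, h * m = m' ∧ p' * h = p := by
  classical
  choose f hf_ne hf_unique using hm_row
  choose g hg_ne hg_unique using hm'_row
  have hf : ∀ x w, w ≠ f x → m x w = 0 := fun x w hw => by_contra fun h => hw (hf_unique x w h)
  have hg : ∀ y w, w ≠ g y → m' y w = 0 := fun y w hw => by_contra fun h => hw (hg_unique y w h)
  -- Where some `p' z y ≠ 0`, `p' * h = p` dictates the shape `p z` of row `y`; elsewhere any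
  -- vector seen by `m` at `g y` will do.
  let v : Y → X → ℝ≥0 := fun y => if hy : ∃ z, p' z y ≠ 0 then p hy.choose else 1
  have hv_row : ∀ z y, p' z y ≠ 0 → v y = p z := fun z y hzy => by
    have hy : ∃ z, p' z y ≠ 0 := ⟨z, hzy⟩
    simp only [v, dif_pos hy, hp' y _ _ hy.choose_spec hzy]
  have hv : ∀ y, (v y ᵥ* m) (g y) ≠ 0 := by
    intro y
    by_cases hy : ∃ z, p' z y ≠ 0
    · obtain ⟨z, hzy⟩ := hy
      rw [hv_row z y hzy, ← Matrix.mul_apply_eq_vecMul, hsq]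
      exact Matrix.vecMul_apply_ne_zero hzy (hg_ne y)
    · obtain ⟨x, hx⟩ := hm_col (g y)
      simp only [v, dif_neg hy]
      exact Matrix.vecMul_apply_ne_zero one_ne_zero hx
  have hp_zero : ∀ z x, (p * m) z (f x) = 0 → p z x = 0 := fun z x hzx =>
    by_contra fun hpzx => Matrix.vecMul_apply_ne_zero hpzx (hf_ne x) hzx
  exact ⟨Matrix.fiberLift m f m' g v, Matrix.fiberLift_mul hf hg hv,
    Matrix.mul_fiberLift hg hv_row hp_zero hsq⟩

/-- Lifting lemma for matrices of nonnegative reals: if `m` and `m'` have exactly one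
nonzero entry in each row and at least one nonzero entry in each column, `p` and `p'`
have at most one nonzero entry in each column, and `p ∘ m = p' ∘ m'`, then there is a
nonnegative matrix `h` with `h ∘ m = m'` and `p' ∘ h = p`. -/
theorem stoch_lifting {W X Y Z : Type} [Fintype W] [Fintype X] [Fintype Y] [Fintype Z]
    (m : Matrix X W ℝ≥0) (m' : Matrix Y W ℝ≥0)
    (p : Matrix Z X ℝ≥0) (p' : Matrix Z Y ℝ≥0)
    (hm_row : ∀ x, ∃! w, m x w ≠ 0) (hm_col : ∀ w, ∃ x, m x w ≠ 0)
    (hm'_row : ∀ y, ∃! w, m' y w ≠ 0) (hm'_col : ∀ w, ∃ y, m' y w ≠ 0)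
    (hp : ∀ x (z z' : Z), p z x ≠ 0 → p z' x ≠ 0 → z = z')
    (hp' : ∀ y (z z' : Z), p' z y ≠ 0 → p' z' y ≠ 0 → z = z')
    (hsq : p * m = p' * m') :
    ∃ h : Matrix Y X ℝ≥0, h * m = m' ∧ p' * h = p :=
  stoch_lifting_general m m' p p' hm_row hm_col hm'_row hp' hsq
end

section
/- In the category of matrices over nonnegative reals, if a matrix p : X → Y is pure — meaning p ⊗ id_A has the right lifting property against (mix) ⊗ id_B for all objects A, B, where mix denotes any all-ones column vector — then p has at most one nonzero entry in each column. -/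
/-!
Take `A = B = Unit` and `S = Y`. The square whose left leg is the all-ones column and whose
right leg puts the row sum `∑ x, p y x` on the diagonal entry `(y, y)` commutes, so it has a
filler `h : X → Y` whose rows all sum to `1` and for which `p * h` is diagonal. If
`p y x ≠ 0` and `p y' x ≠ 0`, choose `s` with `h x s ≠ 0`; by nonnegativity
`(p * h) y s ≠ 0` and `(p * h) y' s ≠ 0`, so `y = s = y'`.
-/

open scoped NNReal

/-- Kronecker product of matrices of nonnegative reals. -/
def kron {a b c d : Type} (A : Matrix a b ℝ≥0) (B : Matrix c d ℝ≥0) :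
    Matrix (a × c) (b × d) ℝ≥0 :=
  fun x y => A x.1 y.1 * B x.2 y.2

/-- The completely mixed state on `S`: the all-ones column vector. -/
def mix (S : Type) : Matrix S Unit ℝ≥0 := fun _ _ => 1

open Matrix

def HasRightLiftAgainstMix {X Y : Type} [Fintype X] (p : Matrix Y X ℝ≥0) (A B S : Type)
    [Fintype A] [DecidableEq A] [Fintype B] [DecidableEq B] [Fintype S] : Prop :=
  ∀ (u : Matrix (X × A) (Unit × B) ℝ≥0) (v : Matrix (Y × A) (S × B) ℝ≥0),
    kron p (1 : Matrix A A ℝ≥0) * u = v * kron (mix S) (1 : Matrix B B ℝ≥0) →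
      ∃ h : Matrix (X × A) (S × B) ℝ≥0,
        h * kron (mix S) (1 : Matrix B B ℝ≥0) = u ∧ kron p (1 : Matrix A A ℝ≥0) * h = v

theorem kron_one_mul_apply {X Y A c : Type} [Fintype X] [Fintype A] [DecidableEq A]
    (p : Matrix Y X ℝ≥0) (N : Matrix (X × A) c ℝ≥0) (y : Y) (a : A) (j : c) :
    (kron p (1 : Matrix A A ℝ≥0) * N) (y, a) j = ∑ x, p y x * N (x, a) j := by
  simp [mul_apply, kron, Fintype.sum_prod_type, one_apply]

theorem mul_kron_mix_one_apply {S B r : Type} [Fintype S] [Fintype B] [DecidableEq B]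
    (N : Matrix r (S × B) ℝ≥0) (i : r) (b : B) :
    (N * kron (mix S) (1 : Matrix B B ℝ≥0)) i ((), b) = ∑ s, N i (s, b) := by
  simp [mul_apply, kron, mix, Fintype.sum_prod_type, one_apply]

theorem exists_rowSum_eq_one_isDiag_mul {X Y : Type} [Fintype X] [Fintype Y] [DecidableEq Y]
    {p : Matrix Y X ℝ≥0} (hp : HasRightLiftAgainstMix p Unit Unit Y) :
    ∃ h : Matrix X Y ℝ≥0, (∀ x, ∑ s, h x s = 1) ∧ (p * h).IsDiag := by
  obtain ⟨h, hu, hv⟩ := hp (of fun _ _ => 1)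
    (of fun ya sb => if sb.1 = ya.1 then ∑ x, p ya.1 x else 0) <| by
      ext ⟨y, ⟨⟩⟩ ⟨⟨⟩, ⟨⟩⟩
      simp [kron_one_mul_apply, mul_kron_mix_one_apply]
  refine ⟨of fun x s => h (x, ()) (s, ()), fun x => ?_, fun y s hys => ?_⟩
  · simpa [mul_kron_mix_one_apply] using congrFun (congrFun hu (x, ())) ((), ())
  · have hvys := congrFun (congrFun hv (y, ())) (s, ())
    rw [kron_one_mul_apply, of_apply, if_neg (Ne.symm hys)] at hvys
    simpa only [mul_apply, of_apply] using hvys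

theorem eq_of_apply_ne_zero_of_isDiag_mul {X Y : Type} [Fintype X] [Fintype Y]
    {p : Matrix Y X ℝ≥0} {h : Matrix X Y ℝ≥0} (hrow : ∀ x, ∑ s, h x s = 1)
    (hdiag : (p * h).IsDiag) {x : X} {y y' : Y} (hy : p y x ≠ 0) (hy' : p y' x ≠ 0) :
    y = y' := by
  obtain ⟨s, -, hs⟩ : ∃ s ∈ Finset.univ, h x s ≠ 0 :=
    Finset.exists_ne_zero_of_sum_ne_zero (by simp [hrow x])
  have eq_s : ∀ {z : Y}, p z x ≠ 0 → z = s := fun {z} hz => by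
    by_contra hzs
    have hsum : ∑ w, p z w * h w s = 0 := by simpa only [mul_apply] using hdiag hzs
    exact mul_ne_zero hz hs (Finset.sum_eq_zero_iff.mp hsum x (Finset.mem_univ x))
  exact (eq_s hy).trans (eq_s hy').symm

theorem stoch_pure_implies_column_general {X Y : Type} [Fintype X] [Fintype Y]
    (p : Matrix Y X ℝ≥0)
    (hpure : ∀ (A B S : Type) [Fintype A] [DecidableEq A] [Fintype B] [DecidableEq B]
      [Fintype S],
      ∀ (u : Matrix (X × A) (Unit × B) ℝ≥0) (v : Matrix (Y × A) (S × B) ℝ≥0),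
        kron p (1 : Matrix A A ℝ≥0) * u = v * kron (mix S) (1 : Matrix B B ℝ≥0) →
          ∃ h : Matrix (X × A) (S × B) ℝ≥0,
            h * kron (mix S) (1 : Matrix B B ℝ≥0) = u ∧
            kron p (1 : Matrix A A ℝ≥0) * h = v) :
    ∀ (x : X) (y y' : Y), p y x ≠ 0 → p y' x ≠ 0 → y = y' := by
  classical
  obtain ⟨h, hrow, hdiag⟩ := exists_rowSum_eq_one_isDiag_mul (hpure Unit Unit Y)
  exact fun _ _ _ => eq_of_apply_ne_zero_of_isDiag_mul hrow hdiag

/-- If a matrix `p` of nonnegative reals is pure — `p ⊗ id_A` has the right lifting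
property against `mix_S ⊗ id_B` for all `A`, `B`, `S` — then `p` has at most one
nonzero entry in each column. -/
theorem stoch_pure_implies_column {X Y : Type} [Fintype X] [Fintype Y] [DecidableEq X]
    (p : Matrix Y X ℝ≥0)
    (hpure : ∀ (A B S : Type) [Fintype A] [DecidableEq A] [Fintype B] [DecidableEq B]
      [Fintype S],
      ∀ (u : Matrix (X × A) (Unit × B) ℝ≥0) (v : Matrix (Y × A) (S × B) ℝ≥0),
        kron p (1 : Matrix A A ℝ≥0) * u = v * kron (mix S) (1 : Matrix B B ℝ≥0) →
          ∃ h : Matrix (X × A) (S × B) ℝ≥0,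
            h * kron (mix S) (1 : Matrix B B ℝ≥0) = u ∧
            kron p (1 : Matrix A A ℝ≥0) * h = v) :
    ∀ (x : X) (y y' : Y), p y x ≠ 0 → p y' x ≠ 0 → y = y' :=
  stoch_pure_implies_column_general p hpure
end

section
/- In the symmetric monoidal category of finite sets and functions, a function g : C → D lies in the right lifting class (in the monoidal sense) of the injections if and only if g is surjective. In particular, if for all finite sets A, B, E, F, injections f : A → B, and functions h : A × E → C × F, k : B × E → D × F with (g × id_F) ∘ h = k ∘ (f × id_E), there is a filler l : B × E → C × F, then g is surjective; and conversely every surjection admits such fillers. -/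
/-- In finite sets with Cartesian product, a function lies in the monoidal right
lifting class of the injections iff it is surjective. -/
theorem discarding_iff_surjective {C D : Type} [Finite C] [Finite D] (g : C → D) :
    (∀ (A B E F : Type) [Finite A] [Finite B] [Finite E] [Finite F],
      ∀ (f : A → B), Function.Injective f →
        ∀ (h : A × E → C × F) (k : B × E → D × F),
          Prod.map g (id : F → F) ∘ h = k ∘ Prod.map f (id : E → E) →
            ∃ l : B × E → C × F,
              l ∘ Prod.map f (id : E → E) = h ∧ Prod.map g (id : F → F) ∘ l = k) ↔
    Function.Surjective g := by
  classical
  constructor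
  · intro H d
    obtain ⟨l, _, hl2⟩ := H Empty Unit Unit Unit (fun _ => ())
      (fun a => a.elim) (fun p => p.1.elim) (fun _ => (d, ()))
      (by funext p; exact p.1.elim)
    refine ⟨(l ((), ())).1, ?_⟩
    have := congrFun hl2 ((), ())
    simpa [Prod.map] using congrArg Prod.fst this
  · intro hg A B E F _ _ _ _ f hf h k hcomm
    refine ⟨fun p => if hb : ∃ a, f a = p.1 then h (hb.choose, p.2)
      else ((hg (k p).1).choose, (k p).2), ?_, ?_⟩
    · funext p
      obtain ⟨a, e⟩ := p
      have hb : ∃ a', f a' = f a := ⟨a, rfl⟩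
      simp only [Function.comp_apply, Prod.map, dif_pos hb]
      have : hb.choose = a := hf hb.choose_spec
      simp [this]
    · funext p
      obtain ⟨b, e⟩ := p
      by_cases hb : ∃ a, f a = b
      · simp only [Function.comp_apply, dif_pos hb]
        have := congrFun hcomm (hb.choose, e)
        simpa [Prod.map, hb.choose_spec] using this
      · simp only [Function.comp_apply, dif_neg hb, Prod.map]
        have := (hg (k (b, e)).1).choose_spec
        simp [this]
end
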